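/- Let (X,T) be a simple, properly ordered Bratteli-Vershik system and let (X',T') be any telescoping of it. If (X,T) is well timed, then (X',T') is well timed; and if (X,T) is very well timed, then (X',T') is very well timed. -/

import Mathlib

set_option autoImplicit false

/-- An ordered Bratteli diagram: finite nonempty vertex sets `V n`, a single root
vertex at level `0`, finite edge sets `E n` (edges from level `n` to level `n+1`,
multiple edges allowed), every vertex has an outgoing edge, every non-root vertex
an incoming edge, and the edges into each vertex carry a linear order, encoded by
the relation `elt` which relates only edges with the same target. -/
structure BDiagram where
  V : ℕ → Type
  E : ℕ → Type
  fintV : ∀ n, Fintype (V n)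
  fintE : ∀ n, Fintype (E n)
  nonV : ∀ n, Nonempty (V n)
  rootSubsingleton : Subsingleton (V 0)
  src : ∀ {n}, E n → V n
  tgt : ∀ {n}, E n → V (n + 1)
  hasOut : ∀ (n : ℕ) (v : V n), ∃ e : E n, src e = v
  hasIn : ∀ (n : ℕ) (v : V (n + 1)), ∃ e : E n, tgt e = v
  elt : ∀ {n}, E n → E n → Prop
  elt_tgt : ∀ (n : ℕ) (e f : E n), elt e f → tgt e = tgt f
  elt_irrefl : ∀ (n : ℕ) (e : E n), ¬ elt e e
  elt_trans : ∀ (n : ℕ) (e f g : E n), elt e f → elt f g → elt e g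
  elt_total : ∀ (n : ℕ) (e f : E n), tgt e = tgt f → e ≠ f → elt e f ∨ elt f e

namespace BDiagram

variable (B : BDiagram)

def castV {m n : ℕ} (h : m = n) (v : B.V m) : B.V n := h ▸ v

/-- An edge is minimal if no edge (into the same target) is below it. -/
def IsMinEdge {n : ℕ} (e : B.E n) : Prop := ∀ e' : B.E n, ¬ B.elt e' e

/-- An edge is maximal if no edge (into the same target) is above it. -/
def IsMaxEdge {n : ℕ} (e : B.E n) : Prop := ∀ e' : B.E n, ¬ B.elt e e'

/-- The space of infinite paths from the root. -/
def PathSpace : Type := { x : ∀ n, B.E n // ∀ n, B.tgt (x n) = B.src (x (n + 1)) }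

def IsMinPath (x : B.PathSpace) : Prop := ∀ n, B.IsMinEdge (x.1 n)

def IsMaxPath (x : B.PathSpace) : Prop := ∀ n, B.IsMaxEdge (x.1 n)

/-- Properly ordered: unique minimal and unique maximal path. -/
def ProperlyOrdered : Prop :=
  (∃! x : B.PathSpace, B.IsMinPath x) ∧ (∃! x : B.PathSpace, B.IsMaxPath x)

/-- The partial order on cofinal paths: `x < y` iff they eventually agree and at the
last disagreement the edge of `x` is below the edge of `y`. -/
def pathLT (x y : B.PathSpace) : Prop :=
  ∃ N : ℕ, B.elt (x.1 N) (y.1 N) ∧ ∀ n : ℕ, N < n → x.1 n = y.1 n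

/-- `T` is the Vershik map: each non-maximal path goes to its successor, and each
maximal path goes to a minimal path. -/
def IsVershik (T : B.PathSpace ≃ B.PathSpace) : Prop :=
  (∀ x : B.PathSpace, ¬ B.IsMaxPath x →
    B.pathLT x (T x) ∧ ∀ z : B.PathSpace, B.pathLT x z → ¬ B.pathLT z (T x)) ∧
  (∀ x : B.PathSpace, B.IsMaxPath x → B.IsMinPath (T x))

/-- `f` is a chain of consecutive edges on levels `[a, b)`. -/
def SegOn (f : ∀ i, B.E i) (a b : ℕ) : Prop :=
  ∀ i : ℕ, a ≤ i → i + 1 < b → B.tgt (f i) = B.src (f (i + 1))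

/-- Simplicity: some telescoping has complete connections between adjacent levels. -/
def Simple : Prop :=
  ∃ ns : ℕ → ℕ, StrictMono ns ∧ ns 0 = 0 ∧
    ∀ (l c : ℕ), ns (l + 1) = c + 1 →
      ∀ (v : B.V (ns l)) (w : B.V (c + 1)),
        ∃ f : ∀ i, B.E i, B.SegOn f (ns l) (c + 1) ∧ B.src (f (ns l)) = v ∧ B.tgt (f c) = w

/-- The natural (Cantor) topology on the path space, induced from the product of
the discrete topologies on the edge sets. -/
def pathTop : TopologicalSpace B.PathSpace :=
  TopologicalSpace.induced Subtype.val (@Pi.topologicalSpace ℕ B.E (fun _ => ⊥))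

/-- Integer iterates of a bijection of the path space. -/
def iterZ (T : B.PathSpace ≃ B.PathSpace) (m : ℤ) : B.PathSpace ≃ B.PathSpace :=
  (T : Equiv.Perm B.PathSpace) ^ m

/-- Two paths have the same `k`-coding: for every time `m` the initial segments of
`T^m x` and `T^m y` from the root to level `k` coincide. -/
def SameCoding (T : B.PathSpace ≃ B.PathSpace) (k : ℕ) (x y : B.PathSpace) : Prop :=
  ∀ (m : ℤ) (i : ℕ), i < k → ((B.iterZ T m) x).1 i = ((B.iterZ T m) y).1 i

/-- A depth `k` pair: distinct paths with the same `k`-coding but not the same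
`(k+1)`-coding. -/
def DepthPair (T : B.PathSpace ≃ B.PathSpace) (k : ℕ) (x y : B.PathSpace) : Prop :=
  x ≠ y ∧ B.SameCoding T k x y ∧ ¬ B.SameCoding T (k + 1) x y

/-- The pair `x, y` has a `j` cut: for some time `m`, both `T^m x` and `T^m y` are
minimal from the root into level `j`. -/
def HasCut (T : B.PathSpace ≃ B.PathSpace) (j : ℕ) (x y : B.PathSpace) : Prop :=
  ∃ m : ℤ, (∀ i : ℕ, i < j → B.IsMinEdge (((B.iterZ T m) x).1 i)) ∧
    (∀ i : ℕ, i < j → B.IsMinEdge (((B.iterZ T m) y).1 i))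

/-- Nonexpansive: for every `k ≥ 1` there are two distinct paths with the same
`k`-coding. -/
def Nonexpansive (T : B.PathSpace ≃ B.PathSpace) : Prop :=
  ∀ k : ℕ, 1 ≤ k → ∃ x y : B.PathSpace, x ≠ y ∧ B.SameCoding T k x y

/-- Well timed: for every `k ≥ 1` and every `j > k` there is a depth `k` pair with
a `j` cut. -/
def WellTimed (T : B.PathSpace ≃ B.PathSpace) : Prop :=
  ∀ k : ℕ, 1 ≤ k → ∀ j : ℕ, k < j →
    ∃ x y : B.PathSpace, B.DepthPair T k x y ∧ B.HasCut T j x y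

/-- Very well timed: for every `k ≥ 1` there is a depth `k` pair having a `j` cut
for every `j > k`. -/
def VeryWellTimed (T : B.PathSpace ≃ B.PathSpace) : Prop :=
  ∀ k : ℕ, 1 ≤ k →
    ∃ x y : B.PathSpace, B.DepthPair T k x y ∧ ∀ j : ℕ, k < j → B.HasCut T j x y

/-- Weakly well timed: for infinitely many `k ≥ 1`, for every `j > k` there is a
depth `k` pair with a `j` cut. -/
def WeaklyWellTimed (T : B.PathSpace ≃ B.PathSpace) : Prop :=
  ∀ K : ℕ, ∃ k : ℕ, K ≤ k ∧ 1 ≤ k ∧ ∀ j : ℕ, k < j →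
    ∃ x y : B.PathSpace, B.DepthPair T k x y ∧ B.HasCut T j x y

/-- Untimed: for every `k ≥ 1` there is a `j > k` such that no depth `k` pair has a
`j` cut. -/
def Untimed (T : B.PathSpace ≃ B.PathSpace) : Prop :=
  ∀ k : ℕ, 1 ≤ k → ∃ j : ℕ, k < j ∧
    ∀ x y : B.PathSpace, B.DepthPair T k x y → ¬ B.HasCut T j x y

/-- Very untimed: for every `k ≥ 1`, no depth `k` pair has a `(k+1)` cut. -/
def VeryUntimed (T : B.PathSpace ≃ B.PathSpace) : Prop :=
  ∀ k : ℕ, 1 ≤ k →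
    ∀ x y : B.PathSpace, B.DepthPair T k x y → ¬ B.HasCut T (k + 1) x y

/-- Finite paths from the root to level `n`. -/
def FinPath (n : ℕ) : Type :=
  { f : (i : Fin n) → B.E i.val //
    ∀ (i : ℕ) (h : i + 1 < n), B.tgt (f ⟨i, by omega⟩) = B.src (f ⟨i + 1, h⟩) }

/-- The lexicographic (from the end) order on finite paths to level `n` induced by
the orders on the edges. -/
def finLT {n : ℕ} (p q : B.FinPath n) : Prop :=
  ∃ (N : ℕ) (h : N < n), B.elt (p.1 ⟨N, h⟩) (q.1 ⟨N, h⟩) ∧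
    ∀ (i : ℕ) (hi : i < n), N < i → p.1 ⟨i, hi⟩ = q.1 ⟨i, hi⟩

/-- The finite path `p` to level `n` ends at the vertex `v`. -/
def EndsAt {n : ℕ} (p : B.FinPath n) (v : B.V n) : Prop :=
  ∀ (m : ℕ) (h : n = m + 1), B.tgt (p.1 ⟨m, by omega⟩) = B.castV h v

/-- The initial segment of an infinite path, from the root to level `n`. -/
def pathInit (x : B.PathSpace) (n : ℕ) : B.FinPath n :=
  ⟨fun i => x.1 i.val, fun i _ => x.2 i⟩

/-- The vertex of an infinite path at level `n`. -/
def pathVert (x : B.PathSpace) (n : ℕ) : B.V n := B.src (x.1 n)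

theorem pathInit_endsAt (x : B.PathSpace) (n : ℕ) :
    B.EndsAt (B.pathInit x n) (B.pathVert x n) := by
  intro m h
  subst h
  exact x.2 m

/-- Truncation of a finite path to a lower level. -/
def truncTo {n : ℕ} (k : ℕ) (hk : k ≤ n) (p : B.FinPath n) : B.FinPath k :=
  ⟨fun i => p.1 ⟨i.val, by omega⟩, fun i h => p.2 i (by omega)⟩

/-- Paths `x, x'` are `k`-equivalent at level `n`: there is an order isomorphism
between the sets of finite paths from the root into their level-`n` vertices which
preserves truncations to level `k` (equality of `k`-basic blocks) and which matches
the initial segment of `x` with the initial segment of `x'` (the "dot" is in the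
same place). -/
def KEquivAt (k n : ℕ) (x x' : B.PathSpace) : Prop :=
  ∃ φ : { p : B.FinPath n // B.EndsAt p (B.pathVert x n) } ≃
      { p : B.FinPath n // B.EndsAt p (B.pathVert x' n) },
    (∀ p q, B.finLT p.1 q.1 ↔ B.finLT (φ p).1 (φ q).1) ∧
    (∀ p (i : ℕ) (hik : i < k) (hin : i < n), ((φ p).1).1 ⟨i, hin⟩ = (p.1).1 ⟨i, hin⟩) ∧
    φ ⟨B.pathInit x n, B.pathInit_endsAt x n⟩ = ⟨B.pathInit x' n, B.pathInit_endsAt x' n⟩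

/-- Paths are `k`-equivalent: they agree from the root to level `k` and are
`k`-equivalent at every level `n > k`. -/
def KEquivPaths (k : ℕ) (x x' : B.PathSpace) : Prop :=
  (∀ i : ℕ, i < k → x.1 i = x'.1 i) ∧ ∀ n : ℕ, k < n → B.KEquivAt k n x x'

/-- Standard nonexpansive: for every `k ≥ 1` there is a pair of distinct
`k`-equivalent paths. -/
def SNE : Prop := ∀ k : ℕ, 1 ≤ k → ∃ x x' : B.PathSpace, x ≠ x' ∧ B.KEquivPaths k x x'

/-!  ### Telescoping  -/

theorem castV_eq_of_heq {m n : ℕ} (h : m = n) {v : B.V m} {w : B.V n} (hw : HEq v w) :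
    B.castV h v = w := by
  subst h
  exact eq_of_heq hw

theorem castV_heq {m n : ℕ} (h : m = n) (v : B.V m) : HEq (B.castV h v) v := by
  subst h
  rfl

theorem castV_inj {m n : ℕ} (h : m = n) {v w : B.V m}
    (hvw : B.castV h v = B.castV h w) : v = w := by
  subst h
  exact hvw

def castE {m n : ℕ} (h : m = n) (e : B.E m) : B.E n := h ▸ e

noncomputable def chainFrom (a : ℕ) (v : B.V a) : (i : ℕ) → B.E (a + i)
  | 0 => (B.hasOut a v).choose
  | i + 1 => (B.hasOut (a + i + 1) (B.tgt (chainFrom a v i))).choose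

theorem chainFrom_src_zero (a : ℕ) (v : B.V a) : B.src (B.chainFrom a v 0) = v :=
  (B.hasOut a v).choose_spec

theorem chainFrom_src_succ (a : ℕ) (v : B.V a) (i : ℕ) :
    B.src (B.chainFrom a v (i + 1)) = B.tgt (B.chainFrom a v i) :=
  (B.hasOut (a + i + 1) (B.tgt (B.chainFrom a v i))).choose_spec

noncomputable def chainTo (a : ℕ) : (j : ℕ) → (w : B.V (a + j + 1)) → (i : ℕ) → i ≤ j → B.E (a + i)
  | 0, w, i, _ => B.castE (by omega : a + 0 = a + i) (B.hasIn a w).choose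
  | j + 1, w, i, _ =>
      if h : i ≤ j then chainTo a j (B.src (B.hasIn (a + j + 1) w).choose) i h
      else B.castE (by omega : a + (j + 1) = a + i) (B.hasIn (a + j + 1) w).choose

theorem chainTo_tgt_last (a : ℕ) : ∀ (j : ℕ) (w : B.V (a + j + 1)),
    B.tgt (B.chainTo a j w j le_rfl) = w := by
  intro j w
  cases j with
  | zero =>
      simp only [chainTo]
      exact (B.hasIn a w).choose_spec
  | succ j =>
      simp only [chainTo]
      rw [dif_neg (by omega : ¬ j + 1 ≤ j)]
      exact (B.hasIn (a + j + 1) w).choose_spec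

theorem chainTo_chain (a : ℕ) : ∀ (j : ℕ) (w : B.V (a + j + 1)) (i : ℕ) (h : i + 1 ≤ j)
    (h' : i ≤ j), B.tgt (B.chainTo a j w i h') = B.src (B.chainTo a j w (i + 1) h) := by
  intro j
  induction j with
  | zero => intro w i h h'; omega
  | succ j ih =>
      intro w i h h'
      by_cases hij : i + 1 ≤ j
      · simp only [chainTo]
        rw [dif_pos (by omega : i ≤ j), dif_pos hij]
        exact ih _ i hij (by omega)
      · have hi : i = j := by omega
        subst hi
        simp only [chainTo]
        rw [dif_pos (le_refl i), dif_neg (by omega : ¬ i + 1 ≤ i)]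
        exact B.chainTo_tgt_last a i _


def TelE (a b : ℕ) : Type :=
  { f : (i : Fin (b - a)) → B.E (a + i.val) //
    ∀ (i : ℕ) (h : i + 1 < b - a), B.tgt (f ⟨i, by omega⟩) = B.src (f ⟨i + 1, h⟩) }

def telSrc {a b : ℕ} (hab : a < b) (f : B.TelE a b) : B.V a :=
  B.src (f.1 ⟨0, by omega⟩)

def telTgt {a b : ℕ} (hab : a < b) (f : B.TelE a b) : B.V b :=
  B.castV (by omega : a + (b - a - 1) + 1 = b) (B.tgt (f.1 ⟨b - a - 1, by omega⟩))

def telLT {a b : ℕ} (f g : B.TelE a b) : Prop :=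
  ∃ (N : ℕ) (h : N < b - a), B.elt (f.1 ⟨N, h⟩) (g.1 ⟨N, h⟩) ∧
    ∀ (i : ℕ) (hi : i < b - a), N < i → f.1 ⟨i, hi⟩ = g.1 ⟨i, hi⟩

noncomputable def Telescope (ns : ℕ → ℕ) (hmono : StrictMono ns) (h0 : ns 0 = 0) : BDiagram where
  V l := B.V (ns l)
  E l := B.TelE (ns l) (ns (l + 1))
  fintV l := B.fintV (ns l)
  fintE l := by
    classical
    letI : ∀ i : Fin (ns (l + 1) - ns l), Fintype (B.E (ns l + i.val)) := fun i => B.fintE _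
    exact Subtype.fintype _
  nonV l := B.nonV (ns l)
  rootSubsingleton := by show Subsingleton (B.V (ns 0)); rw [h0]; exact B.rootSubsingleton
  src {l} f := B.telSrc (hmono (Nat.lt_succ_self l)) f
  tgt {l} f := B.telTgt (hmono (Nat.lt_succ_self l)) f
  hasOut := by
    intro l v
    refine ⟨⟨fun i => B.chainFrom (ns l) v i.val,
      fun i h => (B.chainFrom_src_succ (ns l) v i).symm⟩, ?_⟩
    exact B.chainFrom_src_zero (ns l) v
  hasIn := by
    intro l w
    have hab : ns l < ns (l + 1) := hmono (Nat.lt_succ_self l)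
    have hj : ns l + (ns (l + 1) - ns l - 1) + 1 = ns (l + 1) := by omega
    refine ⟨⟨fun i => B.chainTo (ns l) (ns (l + 1) - ns l - 1) (B.castV hj.symm w) i.val
        (by omega), fun i h => B.chainTo_chain _ _ _ i (by omega) (by omega)⟩, ?_⟩
    show B.castV (by omega) (B.tgt (B.chainTo (ns l) (ns (l + 1) - ns l - 1)
      (B.castV hj.symm w) (ns (l + 1) - ns l - 1) (by omega))) = w
    rw [B.chainTo_tgt_last]
    exact B.castV_eq_of_heq _ (B.castV_heq _ w)
  elt {l} f g := B.telLT f g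
  elt_tgt := by
    rintro l f g ⟨N, hN, hlt, hgt⟩
    show B.telTgt _ f = B.telTgt _ g
    unfold telTgt
    refine congrArg (B.castV _) ?_
    rcases eq_or_lt_of_le (show N ≤ ns (l + 1) - ns l - 1 by omega) with h | h
    · subst h
      exact B.elt_tgt _ _ _ hlt
    · exact congrArg B.tgt (hgt _ (by omega) h)
  elt_irrefl := by
    rintro l f ⟨N, h, hlt, -⟩
    exact B.elt_irrefl _ _ hlt
  elt_trans := by
    rintro l f g h ⟨N₁, hN₁, hlt₁, hgt₁⟩ ⟨N₂, hN₂, hlt₂, hgt₂⟩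
    rcases lt_trichotomy N₁ N₂ with hc | hc | hc
    · exact ⟨N₂, hN₂, by rw [hgt₁ N₂ hN₂ hc]; exact hlt₂,
        fun i hi hN => (hgt₁ i hi (by omega)).trans (hgt₂ i hi hN)⟩
    · subst hc
      exact ⟨N₁, hN₁, B.elt_trans _ _ _ _ hlt₁ hlt₂,
        fun i hi hN => (hgt₁ i hi hN).trans (hgt₂ i hi hN)⟩
    · refine ⟨N₁, hN₁, ?_, fun i hi hN => (hgt₁ i hi hN).trans (hgt₂ i hi (by omega))⟩
      rw [← hgt₂ N₁ hN₁ hc]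
      exact hlt₁
  elt_total := by
    intro l f g htgt hne
    classical
    have hab : ns l < ns (l + 1) := hmono (Nat.lt_succ_self l)
    set b := ns (l + 1) - ns l with hb
    have hex : ∃ N, ∃ h : N < b, f.1 ⟨N, h⟩ ≠ g.1 ⟨N, h⟩ := by
      by_contra hco
      push_neg at hco
      exact hne (Subtype.ext (funext fun i => hco i.val i.isLt))
    set P : ℕ → Prop := fun N => ∃ h : N < b, f.1 ⟨N, h⟩ ≠ g.1 ⟨N, h⟩ with hP
    obtain ⟨N₀, hN₀⟩ := hex
    set N := Nat.findGreatest P b with hNdef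
    have hPN : P N := Nat.findGreatest_spec (le_of_lt hN₀.choose) hN₀
    have hafter : ∀ i (hi : i < b), N < i → f.1 ⟨i, hi⟩ = g.1 ⟨i, hi⟩ := by
      intro i hi hNi
      by_contra hcon
      exact Nat.findGreatest_is_greatest hNi (le_of_lt hi) ⟨hi, hcon⟩
    clear_value N
    obtain ⟨hNb, hNne⟩ := hPN
    have htgtN : B.tgt (f.1 ⟨N, hNb⟩) = B.tgt (g.1 ⟨N, hNb⟩) := by
      rcases eq_or_lt_of_le (show N ≤ b - 1 by omega) with h | h
      · -- N is the last index; use equality of targets of the composite edges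
        subst h
        exact B.castV_inj _ htgt
      · have h2 : f.1 ⟨N + 1, by omega⟩ = g.1 ⟨N + 1, by omega⟩ :=
          hafter (N + 1) (by omega) (by omega)
        rw [f.2 N (by omega), g.2 N (by omega), h2]
    rcases B.elt_total _ _ _ htgtN hNne with h | h
    · exact Or.inl ⟨N, hNb, h, hafter⟩
    · exact Or.inr ⟨N, hNb, h, fun i hi hN => (hafter i hi hN).symm⟩

def teleMap (ns : ℕ → ℕ) (hmono : StrictMono ns) (h0 : ns 0 = 0) (x : B.PathSpace) :
    (B.Telescope ns hmono h0).PathSpace :=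
  ⟨fun l => ⟨fun i => x.1 (ns l + i.val), fun i _ => x.2 (ns l + i)⟩, fun l => by
    have hab : ns l < ns (l + 1) := hmono (Nat.lt_succ_self l)
    have hm : ns l + (ns (l + 1) - ns l - 1) + 1 = ns (l + 1) := by omega
    show B.castV _ (B.tgt (x.1 (ns l + (ns (l + 1) - ns l - 1)))) = B.src (x.1 (ns (l + 1) + 0))
    rw [x.2 (ns l + (ns (l + 1) - ns l - 1))]
    exact B.castV_eq_of_heq _ (by rw [hm]; exact HEq.rfl)⟩


/-- Level `n+1` is uniformly ordered: there is a single nonempty block `P` of paths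
from the root to level `n` such that the `n`-basic block at every vertex at level
`n+1` is a positive power of `P`. -/
def UniformlyOrderedLevel (n : ℕ) : Prop :=
  ∃ (p : ℕ) (hp : 0 < p) (P : Fin p → B.FinPath n),
    ∀ v : B.V (n + 1), ∃ (m : ℕ), 0 < m ∧
      ∃ enum : Fin (m * p) ≃ { q : B.FinPath (n + 1) // B.EndsAt q v },
        (∀ i j : Fin (m * p), i < j ↔ B.finLT (enum i).1 (enum j).1) ∧
        (∀ i : Fin (m * p),
          B.truncTo n (Nat.le_succ n) (enum i).1 = P ⟨i.val % p, Nat.mod_lt _ hp⟩)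

/-- The ordinal label of an edge: its position in the linear order on the edges
into its target. -/
noncomputable def edgeLabel {n : ℕ} (e : B.E n) : ℕ := Nat.card { e' : B.E n // B.elt e' e }

/-- Deterministic: for every `n ≥ 1`, distinct edges with the same source at level
`n` have different ordinal labels. -/
def Deterministic : Prop :=
  ∀ n : ℕ, 1 ≤ n → ∀ e f : B.E n, B.src e = B.src f → e ≠ f →
    B.edgeLabel e ≠ B.edgeLabel f

end BDiagram

/-- A Bratteli–Vershik system: a simple, properly ordered ordered Bratteli diagram
together with its Vershik map. -/
structure BVSystem where
  B : BDiagram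
  T : B.PathSpace ≃ B.PathSpace
  proper : B.ProperlyOrdered
  simple : B.Simple
  vershik : B.IsVershik T

/-- Conjugacy of systems: an equivariant homeomorphism of the path spaces taking
minimal paths to minimal paths. -/
def Conjugate (S S' : BVSystem) : Prop :=
  ∃ φ : S.B.PathSpace ≃ S'.B.PathSpace,
    (@Continuous _ _ S.B.pathTop S'.B.pathTop φ) ∧
    (@Continuous _ _ S'.B.pathTop S.B.pathTop φ.symm) ∧
    (∀ x, φ (S.T x) = S'.T (φ x)) ∧
    (∀ x, S.B.IsMinPath x → S'.B.IsMinPath (φ x))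

/-- An odometer: a system whose diagram has exactly one vertex at every level. -/
def IsOdometer (S : BVSystem) : Prop := ∀ n, Subsingleton (S.B.V n)

/-!
Telescoping does not change the system. Cutting a path of `X` into its blocks of edges
between the levels `ns l` and `ns (l + 1)` is a bijection onto the path space of the
telescoped diagram; it matches the path orders, and minimal (maximal) telescoped edges
with blocks of minimal (maximal) edges. Since a Vershik map is determined by the order
and by the unique minimal path, this bijection conjugates `T` to `T'`. Under it the
`k`-coding of `X'` is the `ns k`-coding of `X` and a `j` cut in `X'` is an `ns j` cut
in `X`, so a depth `ns k` pair of `X` with an `ns j` cut becomes a depth `k` pair of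
`X'` with a `j` cut.
-/

namespace BDiagram

section Blocks

variable {ns : ℕ → ℕ}

theorem exists_block_decomp (hmono : StrictMono ns) (h0 : ns 0 = 0) (i : ℕ) :
    ∃ l t, t < ns (l + 1) - ns l ∧ ns l + t = i := by
  have hex : ∃ l, i < ns (l + 1) := ⟨i, hmono.le_apply.trans_lt (hmono i.lt_succ_self)⟩
  have hle : ns (Nat.find hex) ≤ i := by
    rcases h : Nat.find hex with _ | l
    · omega
    · exact not_lt.1 (Nat.find_min hex (h ▸ l.lt_succ_self))
  have hlt := Nat.find_spec hex
  exact ⟨Nat.find hex, i - ns (Nat.find hex), by omega, by omega⟩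

theorem block_decomp_unique (hmono : StrictMono ns) {l l' t t' : ℕ}
    (ht : t < ns (l + 1) - ns l) (ht' : t' < ns (l' + 1) - ns l')
    (h : ns l + t = ns l' + t') : l = l' ∧ t = t' := by
  rcases lt_trichotomy l l' with hl | rfl | hl
  · have := hmono.monotone (show _ + 1 ≤ _ from hl); omega
  · omega
  · have := hmono.monotone (show _ + 1 ≤ _ from hl); omega

end Blocks

variable (B : BDiagram)

theorem castE_src {m n : ℕ} (h : m = n) (e : B.E m) :
    B.src (B.castE h e) = B.castV h (B.src e) := by
  subst h; rfl

theorem castV_castV_self {m n : ℕ} (h : m = n) (h' : n = m) (v : B.V m) :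
    B.castV h' (B.castV h v) = v := by
  subst h; rfl

theorem pathLT_total (u v : B.PathSpace) (M : ℕ)
    (h : ∀ n, M < n → u.1 n = v.1 n) (hne : u ≠ v) : B.pathLT u v ∨ B.pathLT v u := by
  classical
  have hex : ∃ N, N ≤ M ∧ u.1 N ≠ v.1 N := by
    by_contra! hc
    exact hne (Subtype.ext (funext fun n => (le_or_gt n M).elim (hc n) (h n)))
  obtain ⟨N₀, hN₀M, hN₀⟩ := hex
  set N := Nat.findGreatest (fun N => u.1 N ≠ v.1 N) M
  have hN : u.1 N ≠ v.1 N := Nat.findGreatest_spec (P := fun N => u.1 N ≠ v.1 N) hN₀M hN₀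
  have hafter : ∀ n, N < n → u.1 n = v.1 n := fun n hn =>
    (le_or_gt n M).elim (fun h' => not_not.1 (Nat.findGreatest_is_greatest hn h')) (h n)
  have htgt : B.tgt (u.1 N) = B.tgt (v.1 N) := by
    rw [u.2 N, v.2 N, hafter _ N.lt_succ_self]
  rcases B.elt_total N _ _ htgt hN with hlt | hlt
  · exact Or.inl ⟨N, hlt, hafter⟩
  · exact Or.inr ⟨N, hlt, fun n hn => (hafter n hn).symm⟩

theorem IsVershik.apply_eq_of_isSucc {B : BDiagram} {T : B.PathSpace ≃ B.PathSpace}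
    (hT : B.IsVershik T) {x z : B.PathSpace} (hx : ¬ B.IsMaxPath x) (hxz : B.pathLT x z)
    (hz : ∀ w, B.pathLT x w → ¬ B.pathLT w z) : T x = z := by
  obtain ⟨hlt, hleast⟩ := hT.1 x hx
  obtain ⟨N₁, hN₁lt, hN₁⟩ := hlt
  obtain ⟨N₂, hN₂lt, hN₂⟩ := hxz
  by_contra hne
  have hcofinal : ∀ n, max N₁ N₂ < n → (T x).1 n = z.1 n := fun n hn =>
    (hN₁ n (by omega)).symm.trans (hN₂ n (by omega))
  rcases B.pathLT_total _ _ _ hcofinal hne with h | h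
  · exact hz _ ⟨N₁, hN₁lt, hN₁⟩ h
  · exact hleast _ ⟨N₂, hN₂lt, hN₂⟩ h

noncomputable def telUpdateFun {a b : ℕ} (f : B.TelE a b) (p : ℕ) (e : B.E (a + p))
    (t : ℕ) (ht : t < b - a) : B.E (a + t) :=
  if h1 : t < p then B.chainTo a (p - 1) (B.castV (by omega) (B.src e)) t (by omega)
  else if h2 : t = p then B.castE (by rw [h2]) e
  else f.1 ⟨t, ht⟩

section TelUpdate

variable {a b : ℕ} (f : B.TelE a b) (p : ℕ) (e : B.E (a + p))

theorem telUpdateFun_of_lt (t : ℕ) (ht : t < b - a) (htp : t < p) :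
    B.telUpdateFun f p e t ht = B.chainTo a (p - 1) (B.castV (by omega) (B.src e)) t (by omega) :=
  dif_pos htp

theorem telUpdateFun_self (hp : p < b - a) : B.telUpdateFun f p e p hp = e := by
  rw [telUpdateFun, dif_neg (lt_irrefl p), dif_pos rfl]
  rfl

theorem telUpdateFun_of_gt (t : ℕ) (ht : t < b - a) (hpt : p < t) :
    B.telUpdateFun f p e t ht = f.1 ⟨t, ht⟩ := by
  rw [telUpdateFun, dif_neg (by omega), dif_neg (by omega)]

theorem telUpdateFun_chain {p : ℕ} (hp : p < b - a) {e : B.E (a + p)}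
    (he : B.tgt e = B.tgt (f.1 ⟨p, hp⟩)) (t : ℕ) (ht : t + 1 < b - a) :
    B.tgt (B.telUpdateFun f p e t (by omega)) = B.src (B.telUpdateFun f p e (t + 1) ht) := by
  rcases Nat.lt_trichotomy (t + 1) p with htp | rfl | hpt
  · rw [telUpdateFun_of_lt _ _ _ _ t _ (by omega), telUpdateFun_of_lt _ _ _ _ (t + 1) ht htp]
    exact B.chainTo_chain a (p - 1) _ t (by omega) (by omega)
  · rw [telUpdateFun_of_lt _ _ _ _ t _ t.lt_succ_self, telUpdateFun_self]
    exact (B.chainTo_tgt_last a t _).trans (eq_of_heq (B.castV_heq _ _))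
  · rw [telUpdateFun_of_gt _ _ _ _ (t + 1) ht hpt]
    rcases Nat.lt_or_ge p t with hpt' | hpt'
    · rw [telUpdateFun_of_gt _ _ _ _ t _ hpt']
      exact f.2 t ht
    · obtain rfl : p = t := by omega
      rw [telUpdateFun_self, he]
      exact f.2 p ht

theorem exists_telE_update {p : ℕ} (hp : p < b - a) (e : B.E (a + p))
    (he : B.tgt e = B.tgt (f.1 ⟨p, hp⟩)) :
    ∃ g : B.TelE a b, g.1 ⟨p, hp⟩ = e ∧
      ∀ t (ht : t < b - a), p < t → g.1 ⟨t, ht⟩ = f.1 ⟨t, ht⟩ :=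
  ⟨⟨fun t => B.telUpdateFun f p e t t.isLt, B.telUpdateFun_chain f hp he⟩,
    B.telUpdateFun_self f p e hp, B.telUpdateFun_of_gt f p e⟩

end TelUpdate

section Telescope

variable {ns : ℕ → ℕ} (hmono : StrictMono ns) (h0 : ns 0 = 0)

theorem isMinEdge_telescope_iff {l : ℕ} (f : (B.Telescope ns hmono h0).E l) :
    (B.Telescope ns hmono h0).IsMinEdge f ↔ ∀ t, B.IsMinEdge (f.1 t) := by
  constructor
  · rintro hf ⟨t, ht⟩ e he
    obtain ⟨g, hgt, hgf⟩ := B.exists_telE_update f ht e (B.elt_tgt _ _ _ he)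
    exact hf g ⟨t, ht, hgt ▸ he, hgf⟩
  · rintro hf g ⟨N, hN, hlt, -⟩
    exact hf _ _ hlt

theorem isMaxEdge_telescope_iff {l : ℕ} (f : (B.Telescope ns hmono h0).E l) :
    (B.Telescope ns hmono h0).IsMaxEdge f ↔ ∀ t, B.IsMaxEdge (f.1 t) := by
  constructor
  · rintro hf ⟨t, ht⟩ e he
    obtain ⟨g, hgt, hgf⟩ := B.exists_telE_update f ht e (B.elt_tgt _ _ _ he).symm
    exact hf g ⟨t, ht, hgt ▸ he, fun i hi hti => (hgf i hi hti).symm⟩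
  · rintro hf g ⟨N, hN, hlt, -⟩
    exact hf _ _ hlt

theorem isMinPath_teleMap_iff (x : B.PathSpace) :
    (B.Telescope ns hmono h0).IsMinPath (B.teleMap ns hmono h0 x) ↔ B.IsMinPath x := by
  simp only [IsMinPath, isMinEdge_telescope_iff]
  refine ⟨fun h i => ?_, fun h l t => h _⟩
  obtain ⟨l, t, ht, rfl⟩ := exists_block_decomp hmono h0 i
  exact h l ⟨t, ht⟩

theorem isMaxPath_teleMap_iff (x : B.PathSpace) :
    (B.Telescope ns hmono h0).IsMaxPath (B.teleMap ns hmono h0 x) ↔ B.IsMaxPath x := by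
  simp only [IsMaxPath, isMaxEdge_telescope_iff]
  refine ⟨fun h i => ?_, fun h l t => h _⟩
  obtain ⟨l, t, ht, rfl⟩ := exists_block_decomp hmono h0 i
  exact h l ⟨t, ht⟩

theorem telescope_edge_castE (Y : (B.Telescope ns hmono h0).PathSpace) {l l' t t' : ℕ}
    (ht : t < ns (l + 1) - ns l) (ht' : t' < ns (l' + 1) - ns l') (h : ns l + t = ns l' + t') :
    B.castE h ((Y.1 l).1 ⟨t, ht⟩) = (Y.1 l').1 ⟨t', ht'⟩ := by
  obtain ⟨rfl, rfl⟩ := block_decomp_unique hmono ht ht' h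
  rfl

noncomputable def flattenFun (Y : (B.Telescope ns hmono h0).PathSpace) (i : ℕ) : B.E i :=
  have hi := (exists_block_decomp hmono h0 i).choose_spec.choose_spec
  B.castE hi.2 ((Y.1 _).1 ⟨_, hi.1⟩)

theorem flattenFun_eq_castE (Y : (B.Telescope ns hmono h0).PathSpace) {l t i : ℕ}
    (ht : t < ns (l + 1) - ns l) (h : ns l + t = i) :
    B.flattenFun hmono h0 Y i = B.castE h ((Y.1 l).1 ⟨t, ht⟩) := by
  subst h
  exact B.telescope_edge_castE hmono h0 Y _ ht _

theorem flattenFun_chain (Y : (B.Telescope ns hmono h0).PathSpace) (i : ℕ) :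
    B.tgt (B.flattenFun hmono h0 Y i) = B.src (B.flattenFun hmono h0 Y (i + 1)) := by
  obtain ⟨l, t, ht, rfl⟩ := exists_block_decomp hmono h0 i
  rw [B.flattenFun_eq_castE hmono h0 Y ht rfl]
  by_cases hnext : t + 1 < ns (l + 1) - ns l
  · rw [show B.flattenFun hmono h0 Y (ns l + t + 1) = (Y.1 l).1 ⟨t + 1, hnext⟩ from
      B.flattenFun_eq_castE hmono h0 Y hnext rfl]
    exact (Y.1 l).2 t hnext
  · obtain rfl : t = ns (l + 1) - ns l - 1 := by omega
    have hl := hmono (Nat.lt_add_one l)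
    have hl' := hmono (Nat.lt_add_one (l + 1))
    rw [B.flattenFun_eq_castE hmono h0 Y (l := l + 1) (t := 0) (by omega) (by omega), castE_src]
    exact (B.castV_castV_self _ _ _).symm.trans (congrArg (B.castV _) (Y.2 l))

noncomputable def flatten (Y : (B.Telescope ns hmono h0).PathSpace) : B.PathSpace :=
  ⟨B.flattenFun hmono h0 Y, B.flattenFun_chain hmono h0 Y⟩

theorem teleMap_flatten (Y : (B.Telescope ns hmono h0).PathSpace) :
    B.teleMap ns hmono h0 (B.flatten hmono h0 Y) = Y :=
  Subtype.ext <| funext fun _ => Subtype.ext <| funext fun t =>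
    B.flattenFun_eq_castE hmono h0 Y t.isLt rfl

theorem teleMap_injective : Function.Injective (B.teleMap ns hmono h0) := by
  intro x y h
  refine Subtype.ext (funext fun i => ?_)
  obtain ⟨l, t, ht, rfl⟩ := exists_block_decomp hmono h0 i
  exact congrArg (fun Y : (B.Telescope ns hmono h0).PathSpace => (Y.1 l).1 ⟨t, ht⟩) h

noncomputable def teleEquiv : B.PathSpace ≃ (B.Telescope ns hmono h0).PathSpace :=
  Equiv.ofBijective _ ⟨B.teleMap_injective hmono h0,
    fun Y => ⟨B.flatten hmono h0 Y, B.teleMap_flatten hmono h0 Y⟩⟩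

theorem pathLT_teleMap_iff (x y : B.PathSpace) :
    (B.Telescope ns hmono h0).pathLT (B.teleMap ns hmono h0 x) (B.teleMap ns hmono h0 y) ↔
      B.pathLT x y := by
  constructor
  · rintro ⟨L, ⟨N, hN, hlt, hagreeL⟩, hagree⟩
    refine ⟨ns L + N, hlt, fun n hn => ?_⟩
    obtain ⟨l, t, ht, rfl⟩ := exists_block_decomp hmono h0 n
    rcases lt_trichotomy l L with hl | rfl | hl
    · have := hmono.monotone (show l + 1 ≤ L from hl); omega
    · exact hagreeL t ht (by omega)
    · exact congrArg (fun f : B.TelE _ _ => f.1 ⟨t, ht⟩) (hagree l hl)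
  · rintro ⟨N, hlt, hagree⟩
    obtain ⟨L, N, hN, rfl⟩ := exists_block_decomp hmono h0 N
    refine ⟨L, ⟨N, hN, hlt, fun t _ htN => hagree (ns L + t) (by omega)⟩, fun l hl => ?_⟩
    have := hmono.monotone (show L + 1 ≤ l from hl)
    exact Subtype.ext (funext fun t => hagree (ns l + t) (by omega))

theorem properlyOrdered_telescope (hB : B.ProperlyOrdered) :
    (B.Telescope ns hmono h0).ProperlyOrdered :=
  ⟨(B.teleEquiv hmono h0).existsUnique_congr (fun x => (B.isMinPath_teleMap_iff hmono h0 x).symm)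
      |>.1 hB.1,
    (B.teleEquiv hmono h0).existsUnique_congr (fun x => (B.isMaxPath_teleMap_iff hmono h0 x).symm)
      |>.1 hB.2⟩

theorem teleMap_vershik {T : B.PathSpace ≃ B.PathSpace}
    {T' : (B.Telescope ns hmono h0).PathSpace ≃ (B.Telescope ns hmono h0).PathSpace}
    (hB : B.ProperlyOrdered) (hT : B.IsVershik T) (hT' : (B.Telescope ns hmono h0).IsVershik T')
    (x : B.PathSpace) : B.teleMap ns hmono h0 (T x) = T' (B.teleMap ns hmono h0 x) := by
  by_cases hx : B.IsMaxPath x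
  · exact (B.properlyOrdered_telescope hmono h0 hB).1.unique
      ((B.isMinPath_teleMap_iff hmono h0 _).2 (hT.2 x hx))
      (hT'.2 _ ((B.isMaxPath_teleMap_iff hmono h0 x).2 hx))
  · obtain ⟨hlt, hleast⟩ := hT.1 x hx
    refine (hT'.apply_eq_of_isSucc (mt (B.isMaxPath_teleMap_iff hmono h0 x).1 hx)
      ((B.pathLT_teleMap_iff hmono h0 _ _).2 hlt) fun w hxw hwT => ?_).symm
    obtain ⟨z, rfl⟩ := (B.teleEquiv hmono h0).surjective w
    exact hleast z ((B.pathLT_teleMap_iff hmono h0 _ _).1 hxw)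
      ((B.pathLT_teleMap_iff hmono h0 _ _).1 hwT)

end Telescope

theorem iterZ_semiconj {B B' : BDiagram} (e : B.PathSpace ≃ B'.PathSpace)
    {T : B.PathSpace ≃ B.PathSpace} {T' : B'.PathSpace ≃ B'.PathSpace}
    (h : ∀ x, e (T x) = T' (e x)) (m : ℤ) (x : B.PathSpace) :
    e (B.iterZ T m x) = B'.iterZ T' m (e x) := by
  obtain rfl : T' = e.permCongr T := Equiv.ext fun y => by
    rw [Equiv.permCongr_apply, h, Equiv.apply_symm_apply]
  have := map_zpow e.permCongrHom T m
  rw [Equiv.permCongrHom_coe] at this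
  simp [iterZ, ← this, Equiv.permCongr_apply]

section Coding

variable {ns : ℕ → ℕ} (hmono : StrictMono ns) (h0 : ns 0 = 0)

theorem forall_lt_teleMap_eq_iff (k : ℕ) (x y : B.PathSpace) :
    (∀ l < k, (B.teleMap ns hmono h0 x).1 l = (B.teleMap ns hmono h0 y).1 l) ↔
      ∀ i < ns k, x.1 i = y.1 i := by
  constructor
  · intro h i hi
    obtain ⟨l, t, ht, rfl⟩ := exists_block_decomp hmono h0 i
    have hl : l < k := hmono.lt_iff_lt.1 (by omega)
    exact congrArg (fun f : B.TelE _ _ => f.1 ⟨t, ht⟩) (h l hl)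
  · intro h l hl
    have := hmono.monotone (show l + 1 ≤ k from hl)
    exact Subtype.ext (funext fun t => h (ns l + t) (by omega))

theorem forall_lt_isMinEdge_teleMap_iff (j : ℕ) (x : B.PathSpace) :
    (∀ l < j, (B.Telescope ns hmono h0).IsMinEdge ((B.teleMap ns hmono h0 x).1 l)) ↔
      ∀ i < ns j, B.IsMinEdge (x.1 i) := by
  simp only [isMinEdge_telescope_iff]
  constructor
  · intro h i hi
    obtain ⟨l, t, ht, rfl⟩ := exists_block_decomp hmono h0 i
    exact h l (hmono.lt_iff_lt.1 (by omega)) ⟨t, ht⟩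
  · intro h l hl t
    have := hmono.monotone (show l + 1 ≤ j from hl)
    exact h (ns l + t) (by omega)

variable {T : B.PathSpace ≃ B.PathSpace}
  {T' : (B.Telescope ns hmono h0).PathSpace ≃ (B.Telescope ns hmono h0).PathSpace}

theorem teleMap_iterZ (hB : B.ProperlyOrdered) (hT : B.IsVershik T)
    (hT' : (B.Telescope ns hmono h0).IsVershik T') (m : ℤ) (x : B.PathSpace) :
    B.teleMap ns hmono h0 (B.iterZ T m x) =
      (B.Telescope ns hmono h0).iterZ T' m (B.teleMap ns hmono h0 x) :=
  iterZ_semiconj (B.teleEquiv hmono h0) (B.teleMap_vershik hmono h0 hB hT hT') m x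

theorem sameCoding_teleMap_iff (hB : B.ProperlyOrdered) (hT : B.IsVershik T)
    (hT' : (B.Telescope ns hmono h0).IsVershik T') (k : ℕ) (x y : B.PathSpace) :
    (B.Telescope ns hmono h0).SameCoding T' k (B.teleMap ns hmono h0 x) (B.teleMap ns hmono h0 y)
      ↔ B.SameCoding T (ns k) x y := by
  simp only [SameCoding, ← B.teleMap_iterZ hmono h0 hB hT hT']
  exact forall_congr' fun m => B.forall_lt_teleMap_eq_iff hmono h0 k _ _

theorem hasCut_teleMap_iff (hB : B.ProperlyOrdered) (hT : B.IsVershik T)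
    (hT' : (B.Telescope ns hmono h0).IsVershik T') (j : ℕ) (x y : B.PathSpace) :
    (B.Telescope ns hmono h0).HasCut T' j (B.teleMap ns hmono h0 x) (B.teleMap ns hmono h0 y)
      ↔ B.HasCut T (ns j) x y := by
  simp only [HasCut, ← B.teleMap_iterZ hmono h0 hB hT hT',
    B.forall_lt_isMinEdge_teleMap_iff hmono h0]

theorem depthPair_teleMap (hB : B.ProperlyOrdered) (hT : B.IsVershik T)
    (hT' : (B.Telescope ns hmono h0).IsVershik T') {k : ℕ} {x y : B.PathSpace}
    (h : B.DepthPair T (ns k) x y) :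
    (B.Telescope ns hmono h0).DepthPair T' k (B.teleMap ns hmono h0 x)
      (B.teleMap ns hmono h0 y) := by
  obtain ⟨hne, hsame, hdiff⟩ := h
  simp only [DepthPair, B.sameCoding_teleMap_iff hmono h0 hB hT hT']
  exact ⟨(B.teleMap_injective hmono h0).ne hne, hsame,
    fun hsame' => hdiff fun m i hi => hsame' m i (hi.trans_le (hmono (Nat.lt_add_one k)))⟩

end Coding

end BDiagram

theorem wellTimed_telescoping_general
    (B : BDiagram) (T : B.PathSpace ≃ B.PathSpace)
    (hproper : B.ProperlyOrdered) (hT : B.IsVershik T)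
    (ns : ℕ → ℕ) (hmono : StrictMono ns) (h0 : ns 0 = 0)
    (T' : (B.Telescope ns hmono h0).PathSpace ≃ (B.Telescope ns hmono h0).PathSpace)
    (hT' : (B.Telescope ns hmono h0).IsVershik T') :
    (B.WellTimed T → (B.Telescope ns hmono h0).WellTimed T') ∧
    (B.VeryWellTimed T → (B.Telescope ns hmono h0).VeryWellTimed T') := by
  have hk : ∀ {k}, 1 ≤ k → 1 ≤ ns k := fun hk => hk.trans hmono.le_apply
  have hcut := B.hasCut_teleMap_iff hmono h0 hproper hT hT'
  refine ⟨fun hWT k hk1 j hkj => ?_, fun hVWT k hk1 => ?_⟩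
  · obtain ⟨x, y, hxy, hcutxy⟩ := hWT (ns k) (hk hk1) (ns j) (hmono hkj)
    exact ⟨_, _, B.depthPair_teleMap hmono h0 hproper hT hT' hxy, (hcut j x y).2 hcutxy⟩
  · obtain ⟨x, y, hxy, hcutxy⟩ := hVWT (ns k) (hk hk1)
    exact ⟨_, _, B.depthPair_teleMap hmono h0 hproper hT hT' hxy,
      fun j hkj => (hcut j x y).2 (hcutxy (ns j) (hmono hkj))⟩

/-- If a simple, properly ordered Bratteli–Vershik system is well
timed, then every telescoping of it is well timed; if it is very well timed, every
telescoping is very well timed. -/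
theorem wellTimed_telescoping
    (B : BDiagram) (T : B.PathSpace ≃ B.PathSpace)
    (hproper : B.ProperlyOrdered) (hsimple : B.Simple) (hT : B.IsVershik T)
    (ns : ℕ → ℕ) (hmono : StrictMono ns) (h0 : ns 0 = 0)
    (T' : (B.Telescope ns hmono h0).PathSpace ≃ (B.Telescope ns hmono h0).PathSpace)
    (hT' : (B.Telescope ns hmono h0).IsVershik T') :
    (B.WellTimed T → (B.Telescope ns hmono h0).WellTimed T') ∧
    (B.VeryWellTimed T → (B.Telescope ns hmono h0).VeryWellTimed T') :=
  wellTimed_telescoping_general B T hproper hT ns hmono h0 T' hT'
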